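/- For a real parameter Q ∈ [0, 0.053], define B(Q) = 1 − 2Q − 6Q(1−Q) − Q², λ̃(Q) = ½ + B(Q)/(2(1−Q)²), and the key-rate expression r(Q) = H(½(1−Q)², ½(1−Q)Q, ½Q(1−Q), ½Q², ½Q², ½Q(1−Q), ½(1−Q)Q, ½(1−Q)²) − H((1−Q)², Q(1−Q), (1−Q)Q, Q²) − (2Q(1−Q) + Q²) − (1−Q)²·h(λ̃(Q)) + h(½) − H(½(1−Q), ½Q, ½Q, ½(1−Q)). Then r(Q) > 0 for every Q ∈ [0, 0.053]. (This is the key rate of the semi-quantum protocol under a symmetric attack with Z-basis error Q in each channel and X-basis error Q_X = Q.) -/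
import Mathlib


/-- Shannon entropy (base 2) of a finite tuple of reals. -/
noncomputable def shannonH {n : ℕ} (p : Fin n → ℝ) : ℝ := ∑ i, -(p i * Real.logb 2 (p i))

/-- The binary entropy function `h(p) = -p log₂ p - (1-p) log₂ (1-p)`. -/
noncomputable def binH (p : ℝ) : ℝ := -(p * Real.logb 2 p) - (1 - p) * Real.logb 2 (1 - p)

private lemma keyHalf (x : ℝ) (hx : 0 ≤ x) :
    -(x/2 * Real.logb 2 (x/2)) = (-(x * Real.logb 2 x) + x)/2 := by
  rcases eq_or_lt_of_le hx with h|h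
  · simp [← h]
  · rw [show x/2 = x * (2:ℝ)⁻¹ by ring, Real.logb_mul (ne_of_gt h) (by norm_num),
      Real.logb_inv, Real.logb_self_eq_one (by norm_num)]
    ring

private lemma lg1 : (-0.1878:ℝ) ≤ Real.log 0.8289 := by
  have h := Real.abs_log_sub_add_sum_range_le (x := (0.1711:ℝ)) (by rw [abs_of_pos] <;> norm_num) 4
  rw [abs_le] at h
  norm_num [Finset.sum_range_succ, abs_of_pos] at h
  linarith [h.1]

private lemma log4 : Real.log (4:ℝ) = 2 * Real.log 2 := by
  rw [show (4:ℝ) = 2^2 by norm_num, Real.log_pow]; push_cast; ring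

private lemma log16 : Real.log (16:ℝ) = 4 * Real.log 2 := by
  rw [show (16:ℝ) = 2^4 by norm_num, Real.log_pow]; push_cast; ring

private lemma lg2 : (-1.76564:ℝ) ≤ Real.log 0.1711 := by
  have h := Real.abs_log_sub_add_sum_range_le (x := (0.3156:ℝ)) (by rw [abs_of_pos] <;> norm_num) 7
  rw [abs_le] at h
  norm_num [Finset.sum_range_succ, abs_of_pos] at h
  have e : Real.log (0.1711:ℝ) = Real.log 0.6844 - Real.log 4 := by
    rw [← Real.log_div (by norm_num) (by norm_num)]; norm_num
  rw [e, log4]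
  linarith [Real.log_two_lt_d9, h.1]

private lemma lg3 : (-2.93755:ℝ) ≤ Real.log 0.053 := by
  have h := Real.abs_log_sub_add_sum_range_le (x := (0.152:ℝ)) (by rw [abs_of_pos] <;> norm_num) 4
  rw [abs_le] at h
  norm_num [Finset.sum_range_succ, abs_of_pos] at h
  have e : Real.log (0.053:ℝ) = Real.log 0.848 - Real.log 16 := by
    rw [← Real.log_div (by norm_num) (by norm_num)]; norm_num
  rw [e, log16]
  linarith [Real.log_two_lt_d9, h.1]

private lemma lg4 : (-0.05447:ℝ) ≤ Real.log 0.947 := by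
  have h := Real.abs_log_sub_add_sum_range_le (x := (0.053:ℝ)) (by rw [abs_of_pos] <;> norm_num) 3
  rw [abs_le] at h
  norm_num [Finset.sum_range_succ, abs_of_pos] at h
  linarith [h.1]

private lemma bE2 : Real.binEntropy 0.8289 ≤ 0.457769 := by
  rw [Real.binEntropy, Real.log_inv, Real.log_inv]
  norm_num
  nlinarith [lg1, lg2]

private lemma bE1 : Real.binEntropy 0.053 ≤ 0.207274 := by
  rw [Real.binEntropy, Real.log_inv, Real.log_inv]
  norm_num
  nlinarith [lg3, lg4]

private lemma conv (p : ℝ) : binH p = Real.binEntropy p / Real.log 2 := by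
  simp only [binH, Real.binEntropy, Real.logb, Real.log_inv]
  ring

theorem stmt17 (Q : ℝ) (hQ0 : 0 ≤ Q) (hQ1 : Q ≤ 0.053)
    (B lam r : ℝ)
    (hB : B = 1 - 2 * Q - 6 * Q * (1 - Q) - Q ^ 2)
    (hlam : lam = 1 / 2 + B / (2 * (1 - Q) ^ 2))
    (hr : r = shannonH ![(1 - Q) ^ 2 / 2, (1 - Q) * Q / 2, Q * (1 - Q) / 2, Q ^ 2 / 2,
        Q ^ 2 / 2, Q * (1 - Q) / 2, (1 - Q) * Q / 2, (1 - Q) ^ 2 / 2]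
      - shannonH ![(1 - Q) ^ 2, Q * (1 - Q), (1 - Q) * Q, Q ^ 2]
      - (2 * Q * (1 - Q) + Q ^ 2)
      - (1 - Q) ^ 2 * binH lam
      + binH (1 / 2)
      - shannonH ![(1 - Q) / 2, Q / 2, Q / 2, (1 - Q) / 2]) :
    0 < r := by
  have hQ1' : Q ≤ 0.053 := hQ1
  have h1Q : (0:ℝ) ≤ 1 - Q := by linarith [show (0.053:ℝ) ≤ 1 by norm_num]
  -- Step 1: the identity r = (1-Q)^2 (1 - binH lam) - binH Q
  have hb12 : binH (1/2 : ℝ) = 1 := by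
    have h2 : Real.logb 2 (1/2 : ℝ) = -1 := by
      rw [one_div, Real.logb_inv, Real.logb_self_eq_one (by norm_num)]
    norm_num [binH, h2]
  simp only [shannonH, Fin.sum_univ_succ, Finset.univ_eq_empty, Finset.sum_empty,
    Matrix.cons_val_zero, Matrix.cons_val_succ, add_zero] at hr
  rw [keyHalf ((1-Q)^2) (by positivity), keyHalf ((1-Q)*Q) (by positivity),
    keyHalf (Q*(1-Q)) (by positivity), keyHalf (Q^2) (by positivity),
    keyHalf (1-Q) h1Q, keyHalf Q hQ0, hb12] at hr
  have hr' : r = (1 - Q)^2 * (1 - binH lam) - binH Q := by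
    rw [hr]; simp only [binH]; ring
  clear hr
  -- Step 2: bounds on lam
  have hpos : (0:ℝ) < 2 * (1 - Q)^2 := by nlinarith
  have hlam1 : lam ≤ 1 := by
    have h1 : B / (2 * (1 - Q)^2) ≤ 1/2 := by
      rw [div_le_iff₀ hpos, hB]; nlinarith
    linarith [hlam ▸ le_refl lam, h1, hlam.le]
  have hlamlo : (0.8289:ℝ) ≤ lam := by
    have h1 : (0.3289:ℝ) ≤ B / (2 * (1 - Q)^2) := by
      rw [le_div_iff₀ hpos, hB]
      nlinarith [mul_nonneg (sub_nonneg.2 hQ1') hQ0,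
        mul_nonneg (sub_nonneg.2 hQ1') (sub_nonneg.2 hQ1')]
    rw [hlam]; linarith
  -- Step 3: monotonicity of binary entropy
  have hlog2 : (0.6931471803:ℝ) < Real.log 2 := Real.log_two_gt_d9
  have m1 : Real.binEntropy Q ≤ Real.binEntropy 0.053 := by
    rcases eq_or_lt_of_le hQ1' with h|h
    · rw [h]
    · exact (Real.binEntropy_strictMonoOn ⟨hQ0, by norm_num; linarith⟩
        ⟨by norm_num, by norm_num⟩ h).le
  have m2 : Real.binEntropy lam ≤ Real.binEntropy 0.8289 := by
    rcases eq_or_lt_of_le hlamlo with h|h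
    · rw [← h]
    · exact (Real.binEntropy_strictAntiOn ⟨by norm_num, by norm_num⟩
        ⟨by norm_num; linarith, hlam1⟩ h).le
  -- Step 4: numeric bounds on binH
  have hbHlam : binH lam ≤ 0.6605 := by
    rw [conv]
    have h1 : Real.binEntropy lam ≤ 0.457769 := le_trans m2 bE2
    rw [div_le_iff₀ (by linarith)]
    nlinarith
  have hbHQ : binH Q ≤ 0.29904 := by
    rw [conv]
    have h1 : Real.binEntropy Q ≤ 0.207274 := le_trans m1 bE1
    rw [div_le_iff₀ (by linarith)]
    nlinarith
  -- Step 5: conclude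
  have hQ2 : (0.896809:ℝ) ≤ (1 - Q)^2 := by nlinarith
  have hf : (0.3395:ℝ) ≤ 1 - binH lam := by linarith
  have hprod : (0.896809:ℝ) * 0.3395 ≤ (1 - Q)^2 * (1 - binH lam) :=
    mul_le_mul hQ2 hf (by norm_num) (by positivity)
  rw [hr']
  nlinarith
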